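/- For all n ≥ 1, if F is a triangle-free family of subsets of an n-element set X such that every member of F has size at most n−1, then |F| ≤ 2^{n-1} + n − 1; and this bound is sharp, attained by {A ⊆ X : x ∈ A, |A| ≤ n−1} ∪ {A : |A| ≤ 1, x ∉ A} for any x ∈ X. -/

import Mathlib

/-!
For the upper bound, induct on `#X`. Pick a largest member `A` of `F` (nonempty unless `F ⊆ {∅}`)
and a point `x ∈ X \ A`. The members avoiding `x`, other than `X \ {x}` itself, are a triangle-free
family of proper subsets of `X \ {x}`, so there are at most `2^(n-2) + n - 1` of them. A member
`B ∋ x` is determined by the pair `(B ∩ A, B \ A)`. The sets `B \ A` all contain `x`, so they form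
an intersecting family of subsets of `X \ A`. The nonempty traces `B ∩ A` together with `A` form an
intersecting family of subsets of `A`, since pairwise intersecting members of a triangle-free family
share a point; `A` is not itself a trace, by maximality. An intersecting family of subsets of `S`
has at most `2^(#S-1)` members, so at most `2^(#A-1) · 2^(n-#A-1) = 2^(n-2)` members contain `x`.
-/

open Finset

/-- A `d`-simplex: `d+1` sets whose total intersection is empty but such that
the intersection of any `d` of them is nonempty. -/
def IsSimplex {α : Type*} [DecidableEq α] (d : ℕ) (A : Fin (d + 1) → Finset α) : Prop :=
  (⋂ i, (A i : Set α)) = ∅ ∧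
    ∀ j : Fin (d + 1), (⋂ i, ⋂ (_ : i ≠ j), (A i : Set α)).Nonempty

/-- A family is `d`-simplex-free if it contains no `d`-simplex. -/
def SimplexFree {α : Type*} [DecidableEq α] (d : ℕ) (F : Finset (Finset α)) : Prop :=
  ¬ ∃ A : Fin (d + 1) → Finset α, (∀ i, A i ∈ F) ∧ IsSimplex d A

section

variable {α : Type*} [DecidableEq α]

theorem isSimplex_two_iff (A : Fin 3 → Finset α) :
    IsSimplex 2 A ↔ A 0 ∩ A 1 ∩ A 2 = ∅ ∧ (A 1 ∩ A 2).Nonempty ∧ (A 0 ∩ A 2).Nonempty ∧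
      (A 0 ∩ A 1).Nonempty := by
  simp [IsSimplex, Fin.forall_fin_succ, Set.ext_iff, Set.Nonempty,
    Finset.eq_empty_iff_forall_notMem, Finset.Nonempty]

theorem simplexFree_two_iff {F : Finset (Finset α)} :
    SimplexFree 2 F ↔ ∀ A ∈ F, ∀ B ∈ F, ∀ C ∈ F, (A ∩ B).Nonempty → (A ∩ C).Nonempty →
      (B ∩ C).Nonempty → (A ∩ B ∩ C).Nonempty := by
  constructor
  · intro hF A hA B hB C hC hAB hAC hBC
    by_contra h
    refine hF ⟨![A, B, C], fun i => by fin_cases i <;> assumption, ?_⟩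
    exact (isSimplex_two_iff _).2 ⟨not_nonempty_iff_eq_empty.1 h, hBC, hAC, hAB⟩
  · rintro hF ⟨A, hA, hS⟩
    obtain ⟨hempty, h12, h02, h01⟩ := (isSimplex_two_iff A).1 hS
    exact (hF _ (hA 0) _ (hA 1) _ (hA 2) h01 h02 h12).ne_empty hempty

theorem inter_inter_nonempty_of_card_le_one {A B C : Finset α} (hA : #A ≤ 1)
    (hAB : (A ∩ B).Nonempty) (hAC : (A ∩ C).Nonempty) : (A ∩ B ∩ C).Nonempty := by
  obtain ⟨a, ha⟩ := hAB
  obtain ⟨c, hc⟩ := hAC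
  rw [mem_inter] at ha hc
  obtain rfl : a = c := card_le_one.1 hA a ha.1 c hc.1
  exact ⟨a, mem_inter.2 ⟨mem_inter.2 ha, hc.2⟩⟩

theorem Set.Intersecting.two_mul_card_le_two_pow {K : Finset (Finset α)} {S : Finset α}
    (hK : (K : Set (Finset α)).Intersecting) (hKS : ∀ T ∈ K, T ⊆ S) : 2 * #K ≤ 2 ^ #S := by
  have hinj : Set.InjOn (S \ ·) K := fun T hT U hU h => by
    rw [← Finset.sdiff_sdiff_eq_self (hKS T hT), ← Finset.sdiff_sdiff_eq_self (hKS U hU)]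
    exact congrArg (S \ ·) h
  have hdisj : Disjoint K (K.image (S \ ·)) := by
    rw [Finset.disjoint_left]
    intro T hT hT'
    obtain ⟨U, hU, rfl⟩ := Finset.mem_image.1 hT'
    exact hK hT hU Finset.sdiff_disjoint
  calc 2 * #K = #(K ∪ K.image (S \ ·)) := by
        rw [Finset.card_union_of_disjoint hdisj, Finset.card_image_of_injOn hinj, two_mul]
    _ ≤ #S.powerset := by
        refine Finset.card_le_card (Finset.union_subset (fun T hT => ?_) fun T hT => ?_)
        · exact Finset.mem_powerset.2 (hKS T hT)
        · obtain ⟨U, -, rfl⟩ := Finset.mem_image.1 hT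
          exact Finset.mem_powerset.2 Finset.sdiff_subset
    _ = 2 ^ #S := Finset.card_powerset S

theorem card_le_card_image_inter_mul_card_image_sdiff (F : Finset (Finset α)) (A : Finset α) :
    #F ≤ #(F.image (· ∩ A)) * #(F.image (· \ A)) := by
  rw [← card_product]
  refine card_le_card_of_injOn (fun B => (B ∩ A, B \ A)) (fun B hB => ?_) (fun B _ C _ h => ?_)
  · simp only [coe_product, Set.mem_prod, coe_image]
    exact ⟨Set.mem_image_of_mem _ hB, Set.mem_image_of_mem _ hB⟩
  · simp only [Prod.mk.injEq] at h
    rw [← sdiff_union_inter B A, ← sdiff_union_inter C A, h.1, h.2]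

theorem card_filter_mem_powerset {S : Finset α} {x : α} (hx : x ∈ S) :
    #{A ∈ S.powerset | x ∈ A} = 2 ^ (#S - 1) := by
  have : {A ∈ S.powerset | x ∈ A} = (S.erase x).powerset.image (insert x) := by
    ext A
    simp only [mem_filter, mem_powerset, mem_image, subset_erase]
    constructor
    · rintro ⟨hAS, hxA⟩
      exact ⟨A.erase x, ⟨erase_subset_erase x hAS |>.trans (erase_subset _ _), notMem_erase x A⟩,
        insert_erase hxA⟩
    · rintro ⟨B, ⟨hBS, -⟩, rfl⟩
      exact ⟨insert_subset hx hBS, mem_insert_self x B⟩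
  rw [this, card_image_of_injOn, card_powerset, card_erase_of_mem hx]
  intro B hB C hC h
  simp only [coe_powerset, Set.mem_preimage, Set.mem_powerset_iff, coe_subset, subset_erase]
    at hB hC
  rw [← erase_insert hB.2, ← erase_insert hC.2]
  exact congrArg (·.erase x) h

theorem card_filter_card_le_one_powerset (S : Finset α) :
    #{A ∈ S.powerset | #A ≤ 1} = #S + 1 := by
  have : {A ∈ S.powerset | #A ≤ 1} = insert ∅ (S.powersetCard 1) := by
    ext A
    simp only [mem_filter, mem_powerset, mem_insert, mem_powersetCard,
      Nat.le_one_iff_eq_zero_or_eq_one, card_eq_zero]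
    constructor
    · rintro ⟨hAS, rfl | hA⟩
      exacts [Or.inl rfl, Or.inr ⟨hAS, hA⟩]
    · rintro (rfl | ⟨hAS, hA⟩)
      exacts [⟨empty_subset S, Or.inl rfl⟩, ⟨hAS, Or.inr hA⟩]
  rw [this, card_insert_of_notMem (by simp), card_powersetCard, Nat.choose_one_right]

theorem SimplexFree.mono {d : ℕ} {F G : Finset (Finset α)} (hF : SimplexFree d F) (hGF : G ⊆ F) :
    SimplexFree d G :=
  fun ⟨A, hA, hS⟩ => hF ⟨A, fun i => hGF (hA i), hS⟩

theorem intersecting_of_forall_mem {K : Finset (Finset α)} {x : α} (hK : ∀ T ∈ K, x ∈ T) :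
    (K : Set (Finset α)).Intersecting :=
  fun T hT U hU => not_disjoint_iff.2 ⟨x, hK T hT, hK U hU⟩

theorem SimplexFree.two_mul_card_image_inter_le {F H : Finset (Finset α)} {A : Finset α}
    (hF : SimplexFree 2 F) (hA : A ∈ F) (hAne : A.Nonempty) (hHF : H ⊆ F)
    (hH : (H : Set (Finset α)).Intersecting) (hHA : ∀ B ∈ H, ¬ A ⊆ B) :
    2 * #(H.image (· ∩ A)) ≤ 2 ^ #A := by
  set T := (H.image (· ∩ A)).erase ∅
  have hT : (T : Set (Finset α)).Intersecting := by
    intro U hU V hV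
    rw [mem_coe, mem_erase, mem_image] at hU hV
    obtain ⟨hBA, B, hB, rfl⟩ := hU
    obtain ⟨hCA, C, hC, rfl⟩ := hV
    obtain ⟨z, hz⟩ := simplexFree_two_iff.1 hF A hA B (hHF hB) C (hHF hC)
      (by rw [inter_comm]; exact nonempty_iff_ne_empty.2 hBA)
      (by rw [inter_comm]; exact nonempty_iff_ne_empty.2 hCA)
      (not_disjoint_iff_nonempty_inter.1 (hH hB hC))
    simp only [mem_inter] at hz
    exact not_disjoint_iff.2 ⟨z, by simp [hz], by simp [hz]⟩
  have hTA : ∀ U ∈ T, U ⊆ A := by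
    intro U hU
    obtain ⟨B, -, rfl⟩ := mem_image.1 (mem_erase.1 hU).2
    exact inter_subset_right
  have hAT : A ∉ T := fun hAT => by
    obtain ⟨B, hB, hBA⟩ := mem_image.1 (mem_erase.1 hAT).2
    exact hHA B hB (inter_eq_right.1 hBA)
  have hK : (insert A T : Set (Finset α)).Intersecting :=
    hT.insert hAne.ne_empty fun U hU => by
      rw [not_disjoint_iff_nonempty_inter, inter_eq_right.2 (hTA U hU)]
      exact nonempty_iff_ne_empty.2 (mem_erase.1 hU).1
  have hKA : ∀ U ∈ insert A T, U ⊆ A := by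
    simp only [mem_insert, forall_eq_or_imp]
    exact ⟨subset_refl A, hTA⟩
  calc 2 * #(H.image (· ∩ A)) ≤ 2 * #(insert A T) := by
        have : #(H.image (· ∩ A)) - 1 ≤ #T := pred_card_le_card_erase
        rw [card_insert_of_notMem hAT]
        omega
    _ ≤ 2 ^ #A := Set.Intersecting.two_mul_card_le_two_pow (by simpa using hK) hKA

theorem SimplexFree.four_mul_card_filter_mem_le {F : Finset (Finset α)} {X A : Finset α} {x : α}
    (hF : SimplexFree 2 F) (hFX : ∀ B ∈ F, B ⊆ X) (hA : A ∈ F) (hAne : A.Nonempty)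
    (hAmax : ∀ B ∈ F, #B ≤ #A) (hxA : x ∉ A) :
    4 * #{B ∈ F | x ∈ B} ≤ 2 ^ #X := by
  set H := {B ∈ F | x ∈ B}
  have hHx : ∀ B ∈ H, x ∈ B := fun B hB => (mem_filter.1 hB).2
  have htraces := hF.two_mul_card_image_inter_le hA hAne (filter_subset _ F)
    (intersecting_of_forall_mem hHx) fun B hB hAB => by
      have := card_le_card (insert_subset (hHx B hB) hAB)
      rw [card_insert_of_notMem hxA] at this
      exact (hAmax B (mem_filter.1 hB).1).not_gt this
  have hdiffs : 2 * #(H.image (· \ A)) ≤ 2 ^ #(X \ A) := by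
    refine Set.Intersecting.two_mul_card_le_two_pow (intersecting_of_forall_mem (x := x) ?_) ?_
    · simp only [mem_image]
      rintro _ ⟨B, hB, rfl⟩
      exact mem_sdiff.2 ⟨hHx B hB, hxA⟩
    · simp only [mem_image]
      rintro _ ⟨B, hB, rfl⟩
      exact sdiff_subset_sdiff (hFX B (mem_filter.1 hB).1) le_rfl
  calc 4 * #H ≤ (2 * #(H.image (· ∩ A))) * (2 * #(H.image (· \ A))) := by
        nlinarith [card_le_card_image_inter_mul_card_image_sdiff H A]
    _ ≤ 2 ^ #A * 2 ^ #(X \ A) := Nat.mul_le_mul htraces hdiffs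
    _ = 2 ^ #X := by rw [← pow_add, add_comm, card_sdiff_add_card_eq_card (hFX A hA)]

theorem SimplexFree.card_le_of_forall_ssubset {F : Finset (Finset α)} {X : Finset α}
    (hF : SimplexFree 2 F) (hFX : ∀ A ∈ F, A ⊂ X) : #F ≤ 2 ^ (#X - 1) + #X - 1 := by
  induction X using Finset.strongInduction generalizing F with
  | H X ih =>
  obtain rfl | hX := X.eq_empty_or_nonempty
  · have : F = ∅ := eq_empty_of_forall_notMem fun A hA => not_ssubset_empty A (hFX A hA)
    simp [this]
  by_cases hsmall : ∀ A ∈ F, A = ∅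
  · have : #F ≤ 1 := card_le_one.2 fun A hA B hB => (hsmall A hA).trans (hsmall B hB).symm
    have := hX.card_pos
    have := Nat.one_le_two_pow (n := #X - 1)
    omega
  push Not at hsmall
  obtain ⟨A₁, hA₁, hA₁ne⟩ := hsmall
  obtain ⟨A, hA, hAmax⟩ := F.exists_max_image card ⟨A₁, hA₁⟩
  have hAne : A.Nonempty := card_pos.1 (hA₁ne.card_pos.trans_le (hAmax A₁ hA₁))
  obtain ⟨x, hxX, hxA⟩ := exists_of_ssubset (hFX A hA)
  have hX2 : 2 ≤ #X := by
    have := hAne.card_pos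
    have := card_lt_card (hFX A hA)
    omega
  have hcontaining := hF.four_mul_card_filter_mem_le (fun B hB => (hFX B hB).subset) hA hAne
    hAmax hxA
  have havoiding : #{B ∈ F | x ∉ B} ≤ 2 ^ (#X - 2) + #X - 1 := by
    have hY := ih (X.erase x) (erase_ssubset hxX) (F := {B ∈ F | x ∉ B}.erase (X.erase x))
      (hF.mono ((erase_subset _ _).trans (filter_subset _ F))) fun B hB => by
        obtain ⟨hBY, hBF, hxB⟩ := mem_erase.1 hB |>.imp_right mem_filter.1
        exact (subset_erase.2 ⟨(hFX B hBF).subset, hxB⟩).ssubset_of_ne hBY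
    have : #{B ∈ F | x ∉ B} - 1 ≤ #({B ∈ F | x ∉ B}.erase (X.erase x)) :=
      pred_card_le_card_erase
    simp only [card_erase_of_mem hxX, Nat.sub_sub, Nat.reduceAdd] at hY
    have := Nat.one_le_two_pow (n := #X - 2)
    omega
  have hsplit := card_filter_add_card_filter_not (s := F) (x ∈ ·)
  have hpow : 2 ^ #X = 4 * 2 ^ (#X - 2) ∧ 2 ^ (#X - 1) = 2 * 2 ^ (#X - 2) := by
    obtain ⟨k, hk⟩ : ∃ k, #X = k + 2 := ⟨#X - 2, by omega⟩
    rw [hk, Nat.add_sub_cancel, show k + 2 - 1 = k + 1 by omega]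
    constructor <;> ring
  omega

def extremalFamily (X : Finset α) (x : α) : Finset (Finset α) :=
  {A ∈ X.powerset | x ∈ A ∧ #A ≤ #X - 1} ∪ {A ∈ X.powerset | #A ≤ 1 ∧ x ∉ A}

theorem simplexFree_extremalFamily (X : Finset α) (x : α) :
    SimplexFree 2 (extremalFamily X x) := by
  have hsmall : ∀ A ∈ extremalFamily X x, x ∉ A → #A ≤ 1 := by
    intro A hA hxA
    simp only [extremalFamily, mem_union, mem_filter] at hA
    tauto
  rw [simplexFree_two_iff]
  intro A hA B hB C hC hAB hAC hBC
  by_cases hxA : x ∉ A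
  · exact inter_inter_nonempty_of_card_le_one (hsmall A hA hxA) hAB hAC
  by_cases hxB : x ∉ B
  · rw [inter_comm A B]
    exact inter_inter_nonempty_of_card_le_one (hsmall B hB hxB) (inter_comm A B ▸ hAB) hBC
  by_cases hxC : x ∉ C
  · rw [inter_comm, ← inter_assoc]
    exact inter_inter_nonempty_of_card_le_one (hsmall C hC hxC) (inter_comm A C ▸ hAC)
      (inter_comm B C ▸ hBC)
  push Not at hxA hxB hxC
  exact ⟨x, by simp [hxA, hxB, hxC]⟩

theorem card_le_of_mem_extremalFamily {X A : Finset α} {x : α} (hx : x ∈ X)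
    (hA : A ∈ extremalFamily X x) : #A ≤ #X - 1 := by
  simp only [extremalFamily, mem_union, mem_filter, mem_powerset] at hA
  rcases hA with ⟨-, -, hA⟩ | ⟨hAX, -, hxA⟩
  · exact hA
  · rw [← card_erase_of_mem hx]
    exact card_le_card (subset_erase.2 ⟨hAX, hxA⟩)

theorem card_extremalFamily {X : Finset α} {x : α} (hx : x ∈ X) :
    #(extremalFamily X x) = 2 ^ (#X - 1) + #X - 1 := by
  have hcontaining :
      {A ∈ X.powerset | x ∈ A ∧ #A ≤ #X - 1} = {A ∈ X.powerset | x ∈ A}.erase X := by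
    ext A
    simp only [mem_filter, mem_erase, mem_powerset]
    constructor
    · rintro ⟨hAX, hxA, hA⟩
      refine ⟨fun h => ?_, hAX, hxA⟩
      subst h
      have := card_pos.2 ⟨x, hxA⟩
      omega
    · rintro ⟨hne, hAX, hxA⟩
      exact ⟨hAX, hxA, Nat.le_sub_one_of_lt (card_lt_card (hAX.ssubset_of_ne hne))⟩
  have havoiding :
      {A ∈ X.powerset | #A ≤ 1 ∧ x ∉ A} = {A ∈ (X.erase x).powerset | #A ≤ 1} := by
    ext A
    simp only [mem_filter, mem_powerset, subset_erase]
    tauto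
  have hdisj :
      Disjoint {A ∈ X.powerset | x ∈ A ∧ #A ≤ #X - 1} {A ∈ X.powerset | #A ≤ 1 ∧ x ∉ A} :=
    disjoint_filter.2 fun A _ h h' => h'.2 h.1
  rw [extremalFamily, card_union_of_disjoint hdisj, hcontaining, havoiding, card_erase_of_mem,
    card_filter_mem_powerset hx, card_filter_card_le_one_powerset, card_erase_of_mem hx]
  · have := card_pos.2 ⟨x, hx⟩
    have := Nat.one_le_two_pow (n := #X - 1)
    omega
  · exact mem_filter.2 ⟨mem_powerset_self X, hx⟩

end

theorem stmt8 {α : Type*} [DecidableEq α] (n : ℕ) (hn : 1 ≤ n) (X : Finset α)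
    (hX : X.card = n) :
    (∀ F : Finset (Finset α), F ⊆ X.powerset → (∀ A ∈ F, A.card ≤ n - 1) →
      SimplexFree 2 F → F.card ≤ 2 ^ (n - 1) + n - 1) ∧
    (∀ x ∈ X,
      let G := X.powerset.filter (fun A => x ∈ A ∧ A.card ≤ n - 1) ∪
        X.powerset.filter (fun A => A.card ≤ 1 ∧ x ∉ A);
      G ⊆ X.powerset ∧ (∀ A ∈ G, A.card ≤ n - 1) ∧ SimplexFree 2 G ∧
        G.card = 2 ^ (n - 1) + n - 1) := by
  subst hX
  refine ⟨fun F hFX hFc hF => hF.card_le_of_forall_ssubset fun A hA => ?_, fun x hx => ?_⟩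
  · refine (mem_powerset.1 (hFX hA)).ssubset_of_ne fun h => ?_
    have := hFc A hA
    rw [h] at this
    omega
  · exact ⟨union_subset (filter_subset _ _) (filter_subset _ _),
      fun A hA => card_le_of_mem_extremalFamily hx hA, simplexFree_extremalFamily X x,
      card_extremalFamily hx⟩
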